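/- arXiv:2412.10304 — 4 statements merged into one kernel-verified Lean document; each statement's English description precedes it below -/
import Mathlib

section
/- Let σ > 0, m ∈ ℝ, and let ℓ(y|m,σ) = (2πσ²)^{−1/2} exp(−(y−m)²/(2σ²)) be the N(m,σ²) density. For nonnegative integers j and k, let κ_{jk} = ∫_{−∞}^{∞} [ (∂^j ℓ(y|m,σ)/∂m^j) · (∂^k ℓ(y|m,σ)/∂m^k) / ℓ(y|m,σ) ] dy. Then κ_{jk} = 1{j = k} · j!/σ^{2j}. -/
noncomputable section

/-- The `N(m,σ²)` density `ℓ(y|m,σ) = (2πσ²)^{-1/2} exp(-(y-m)²/(2σ²))`. -/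
def gpdf (m σ y : ℝ) : ℝ :=
  (Real.sqrt (2 * Real.pi * σ ^ 2))⁻¹ * Real.exp (-(y - m) ^ 2 / (2 * σ ^ 2))

/-!
Write `φ(x) = exp(-x²/2)` and `Heₙ = Polynomial.hermite n` (probabilists' Hermite polynomials).
Since `(Heₙ φ)' = -Heₙ₊₁ φ`, differentiating `ℓ(y|m,σ) ∝ φ((y - m)/σ)` in `m` gives
`∂ⁿₘ ℓ = σ⁻ⁿ Heₙ(u) ℓ` with `u = (y - m)/σ`. After the substitution `y ↦ u` the claim becomes
Hermite orthogonality `∫ Heⱼ Heₖ φ = 1{j = k} j! √(2π)`, which follows by integrating by parts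
`k` times: `∫ p Heₖ φ = ∫ p⁽ᵏ⁾ φ` for every polynomial `p`, and `Heⱼ⁽ᵏ⁾` is `0` for `j < k`
and `j!` for `j = k`.
-/

open Polynomial MeasureTheory Real
open scoped Nat

namespace Polynomial

theorem hasDerivAt_aeval_hermite_mul_gaussian (n : ℕ) (x : ℝ) :
    HasDerivAt (fun x : ℝ => aeval x (hermite n) * exp (-(x ^ 2 / 2)))
      (-(aeval x (hermite (n + 1)) * exp (-(x ^ 2 / 2)))) x := by
  have hgauss : HasDerivAt (fun x : ℝ => exp (-(x ^ 2 / 2))) (-x * exp (-(x ^ 2 / 2))) x := by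
    simpa [mul_comm] using ((hasDerivAt_pow 2 x).div_const 2).neg.exp
  refine (((hermite n).hasDerivAt_aeval x).mul hgauss).congr_deriv ?_
  rw [hermite_succ]
  simp only [map_sub, map_mul, aeval_X]
  ring

variable {R S : Type*} [CommSemiring R] [Algebra R ℝ] [CommSemiring S] [Algebra S ℝ]

theorem integrable_aeval_mul_gaussian (p : R[X]) :
    Integrable fun x : ℝ => aeval x p * exp (-(x ^ 2 / 2)) := by
  have hpow (i : ℕ) : Integrable fun x : ℝ => x ^ i * exp (-(x ^ 2 / 2)) := by
    simpa [Real.rpow_natCast, neg_div, div_eq_inv_mul] using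
      integrable_rpow_mul_exp_neg_mul_sq (b := 1 / 2) (by norm_num) (s := i)
        (by linarith [i.cast_nonneg (α := ℝ)])
  simp_rw [aeval_eq_sum_range, Algebra.smul_def, Finset.sum_mul, mul_assoc]
  exact integrable_finsetSum _ fun i _ => (hpow i).const_mul _

theorem integrable_aeval_mul_aeval_mul_gaussian (p : R[X]) (q : S[X]) :
    Integrable fun x : ℝ => aeval x p * (aeval x q * exp (-(x ^ 2 / 2))) := by
  convert integrable_aeval_mul_gaussian (p.map (algebraMap R ℝ) * q.map (algebraMap S ℝ)) using 2
  simp only [map_mul, aeval_map_algebraMap, mul_assoc]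

theorem integral_aeval_mul_hermite_mul_gaussian (p : R[X]) (k : ℕ) :
    ∫ x : ℝ, aeval x p * (aeval x (hermite k) * exp (-(x ^ 2 / 2)))
      = ∫ x : ℝ, aeval x (derivative^[k] p) * exp (-(x ^ 2 / 2)) := by
  induction k generalizing p with
  | zero => simp
  | succ k ih =>
    have hv (x : ℝ) : HasDerivAt (fun x : ℝ => -(aeval x (hermite k) * exp (-(x ^ 2 / 2))))
        (aeval x (hermite (k + 1)) * exp (-(x ^ 2 / 2))) x := by
      simpa using (hasDerivAt_aeval_hermite_mul_gaussian k x).fun_neg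
    have hneg (q : R[X]) : Integrable fun x : ℝ =>
        aeval x q * -(aeval x (hermite k) * exp (-(x ^ 2 / 2))) := by
      simpa only [mul_neg] using (integrable_aeval_mul_aeval_mul_gaussian q (hermite k)).fun_neg
    rw [integral_mul_deriv_eq_deriv_mul_of_integrable (fun x _ => p.hasDerivAt_aeval x)
      (fun x _ => hv x) (integrable_aeval_mul_aeval_mul_gaussian p (hermite (k + 1)))
      (hneg (derivative p)) (hneg p)]
    simp only [mul_neg, integral_neg, neg_neg, ih, Function.iterate_succ_apply]

theorem iterate_derivative_hermite_self (n : ℕ) :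
    derivative^[n] (hermite n) = C (n ! : ℤ) := by
  have hdeg : (derivative^[n] (hermite n)).natDegree = 0 := by
    simpa using natDegree_iterate_derivative (hermite n) n
  rw [eq_C_of_natDegree_eq_zero hdeg, coeff_iterate_derivative, zero_add,
    coeff_hermite_self, Nat.descFactorial_self, nsmul_one]

theorem integral_aeval_hermite_mul_aeval_hermite_mul_gaussian_of_lt {j k : ℕ} (h : j < k) :
    ∫ x : ℝ, aeval x (hermite j) * (aeval x (hermite k) * exp (-(x ^ 2 / 2))) = 0 := by
  rw [integral_aeval_mul_hermite_mul_gaussian, iterate_derivative_eq_zero (by simpa using h)]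
  simp

theorem integral_exp_neg_sq_div_two : ∫ x : ℝ, exp (-(x ^ 2 / 2)) = √(2 * π) := by
  simpa [neg_div, div_eq_inv_mul, div_inv_eq_mul, mul_comm] using integral_gaussian (1 / 2)

theorem integral_aeval_hermite_mul_aeval_hermite_mul_gaussian (j k : ℕ) :
    ∫ x : ℝ, aeval x (hermite j) * (aeval x (hermite k) * exp (-(x ^ 2 / 2)))
      = if j = k then (j ! : ℝ) * √(2 * π) else 0 := by
  rcases lt_trichotomy j k with h | rfl | h
  · rw [if_neg h.ne, integral_aeval_hermite_mul_aeval_hermite_mul_gaussian_of_lt h]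
  · rw [if_pos rfl, integral_aeval_mul_hermite_mul_gaussian, iterate_derivative_hermite_self,
      ← integral_exp_neg_sq_div_two, ← integral_const_mul]
    simp
  · rw [if_neg h.ne', ← integral_aeval_hermite_mul_aeval_hermite_mul_gaussian_of_lt h]
    simp only [mul_left_comm]

end Polynomial

theorem integral_comp_sub_div {E : Type*} [NormedAddCommGroup E] [NormedSpace ℝ E]
    (F : ℝ → E) (m σ : ℝ) : ∫ y : ℝ, F ((y - m) / σ) = |σ| • ∫ x : ℝ, F x := by
  rw [integral_sub_right_eq_self (fun y => F (y / σ)) m, Measure.integral_comp_div]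

theorem iteratedDeriv_gaussian_sub_div (n : ℕ) (σ y m : ℝ) :
    iteratedDeriv n (fun m' => exp (-(((y - m') / σ) ^ 2 / 2))) m
      = σ⁻¹ ^ n * (aeval ((y - m) / σ) (hermite n) * exp (-(((y - m) / σ) ^ 2 / 2))) := by
  induction n generalizing m with
  | zero => simp
  | succ n ih =>
    have hu : HasDerivAt (fun m : ℝ => (y - m) / σ) (-σ⁻¹) m := by
      simpa [neg_div, one_div] using ((hasDerivAt_id m).const_sub y).div_const σ
    have h := (((hasDerivAt_aeval_hermite_mul_gaussian n ((y - m) / σ)).comp m hu).const_mul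
      (σ⁻¹ ^ n))
    rw [iteratedDeriv_succ, funext ih]
    exact h.deriv.trans (by ring)

theorem gpdf_eq_mul_gaussian (m σ y : ℝ) :
    gpdf m σ y = (√(2 * π * σ ^ 2))⁻¹ * exp (-(((y - m) / σ) ^ 2 / 2)) := by
  rw [gpdf, div_pow, div_div, neg_div]
  ring_nf

theorem iteratedDeriv_gpdf (n : ℕ) (m σ y : ℝ) :
    iteratedDeriv n (fun m' => gpdf m' σ y) m = (√(2 * π * σ ^ 2))⁻¹ * σ⁻¹ ^ n *
      (aeval ((y - m) / σ) (hermite n) * exp (-(((y - m) / σ) ^ 2 / 2))) := by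
  simp_rw [gpdf_eq_mul_gaussian, iteratedDeriv_const_mul_field, iteratedDeriv_gaussian_sub_div,
    mul_assoc]

/-- **Orthogonality of the Bhattacharyya basis for the normal location family.**
For `Y ∼ N(m,σ²)` and nonnegative integers `j, k`,
`κ_{jk} = ∫ (∂ʲℓ/∂mʲ)(∂ᵏℓ/∂mᵏ)/ℓ dy = 1{j = k} · j!/σ^{2j}`. -/
theorem stmt4 (m σ : ℝ) (hσ : 0 < σ) (j k : ℕ) :
    (∫ y : ℝ, iteratedDeriv j (fun m' => gpdf m' σ y) m
        * iteratedDeriv k (fun m' => gpdf m' σ y) m / gpdf m σ y)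
    = if j = k then (Nat.factorial j : ℝ) / σ ^ (2 * j) else 0 := by
  have hsqrt : √(2 * π * σ ^ 2) = √(2 * π) * σ := by
    rw [Real.sqrt_mul (by positivity), Real.sqrt_sq hσ.le]
  have hintegrand (y : ℝ) : iteratedDeriv j (fun m' => gpdf m' σ y) m
        * iteratedDeriv k (fun m' => gpdf m' σ y) m / gpdf m σ y
      = (√(2 * π) * σ)⁻¹ * σ⁻¹ ^ (j + k) * (aeval ((y - m) / σ) (hermite j) *
          (aeval ((y - m) / σ) (hermite k) * exp (-(((y - m) / σ) ^ 2 / 2)))) := by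
    rw [iteratedDeriv_gpdf, iteratedDeriv_gpdf, gpdf_eq_mul_gaussian, hsqrt]
    field_simp
    ring
  simp_rw [hintegrand]
  rw [integral_const_mul, integral_comp_sub_div (fun x => aeval x (hermite j) *
      (aeval x (hermite k) * exp (-(x ^ 2 / 2)))),
    integral_aeval_hermite_mul_aeval_hermite_mul_gaussian, smul_eq_mul, abs_of_pos hσ]
  split_ifs with hjk
  · subst hjk
    rw [← two_mul, inv_pow]
    field_simp
  · simp

end
end

section
/- Fix an integer T ≥ 1, σ² > 0, η ∈ ℝ, and y ∈ ℝ^T, and write ȳ = T⁻¹ Σ_{j=1}^T y_j. Define u(y; σ², η) = −T/(2σ²) + (1/(2σ⁴)) Σ_{j=1}^T (y_j − η)² and v₂(y; σ², η) = −T/σ² + (Σ_{j=1}^T (y_j − η)/σ²)². Then u(y; σ², η) − (1/(2T)) v₂(y; σ², η) = (1/(2σ²)) [ (Σ_{j=1}^T (y_j − ȳ)²)/σ² − (T − 1) ]; in particular, the left-hand side does not depend on η. -/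
/-! Writing `ȳ` for the mean, `∑ⱼ (yⱼ - η)² = ∑ⱼ (yⱼ - ȳ)² + T (ȳ - η)²` and
`∑ⱼ (yⱼ - η) = T (ȳ - η)`, so the `η`-dependent term `T (ȳ - η)² / (2σ⁴)` of `u` is exactly
cancelled by the one of `v₂ / (2T)`. -/

open Finset

namespace Finset

variable {ι K : Type*} [Field K] (s : Finset ι) (f : ι → K)

theorem sum_sub_eq_card_mul_mean_sub (c : K) (hs : (#s : K) ≠ 0) :
    ∑ i ∈ s, (f i - c) = #s * ((∑ j ∈ s, f j) / #s - c) := by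
  rw [sum_sub_distrib, sum_const, nsmul_eq_mul, mul_sub, mul_div_cancel₀ _ hs]

theorem sum_sub_mean_eq_zero (hs : (#s : K) ≠ 0) :
    ∑ i ∈ s, (f i - (∑ j ∈ s, f j) / #s) = 0 := by
  rw [sum_sub_eq_card_mul_mean_sub s f _ hs, sub_self, mul_zero]

theorem sum_sub_sq_eq_sum_sub_mean_sq_add (c : K) (hs : (#s : K) ≠ 0) :
    ∑ i ∈ s, (f i - c) ^ 2 =
      ∑ i ∈ s, (f i - (∑ j ∈ s, f j) / #s) ^ 2 + #s * ((∑ j ∈ s, f j) / #s - c) ^ 2 := by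
  set m := (∑ j ∈ s, f j) / #s
  calc ∑ i ∈ s, (f i - c) ^ 2
      = ∑ i ∈ s, ((f i - m) ^ 2 + 2 * (m - c) * (f i - m) + (m - c) ^ 2) :=
        sum_congr rfl fun _ _ => by ring
    _ = ∑ i ∈ s, (f i - m) ^ 2 + 2 * (m - c) * ∑ i ∈ s, (f i - m) + #s * (m - c) ^ 2 := by
        rw [sum_add_distrib, sum_add_distrib, ← mul_sum, sum_const, nsmul_eq_mul]
    _ = ∑ i ∈ s, (f i - m) ^ 2 + #s * (m - c) ^ 2 := by
        rw [sum_sub_mean_eq_zero s f hs, mul_zero, add_zero]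

end Finset

theorem stmt8_general (T : ℕ) (hT : 1 ≤ T) (s η : ℝ) (y : Fin T → ℝ) :
    (-(T : ℝ) / (2 * s) + (1 / (2 * s ^ 2)) * ∑ j, (y j - η) ^ 2)
      - (1 / (2 * (T : ℝ))) * (-(T : ℝ) / s + (∑ j, (y j - η) / s) ^ 2)
    = (1 / (2 * s)) * ((∑ j, (y j - (∑ k, y k) / (T : ℝ)) ^ 2) / s - ((T : ℝ) - 1)) := by
  have hT₀ : (#(univ : Finset (Fin T)) : ℝ) ≠ 0 := by simp; omega
  rw [← sum_div, sum_sub_eq_card_mul_mean_sub _ _ η hT₀,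
    sum_sub_sq_eq_sum_sub_mean_sq_add _ _ η hT₀]
  simp only [card_univ, Fintype.card_fin] at hT₀ ⊢
  set m := (∑ k, y k) / T
  -- the two sides differ by a multiple of `T * T⁻¹ - 1`
  linear_combination (1 / (2 * s) - T * (m - η) ^ 2 / (2 * s ^ 2)) * mul_inv_cancel₀ hT₀

/-- **Neyman–Scott model: the second-order orthogonalized score.**
For `T ≥ 1`, `s = σ² > 0`, `η ∈ ℝ` and `y ∈ ℝ^T`, the per-unit score
`u(y;σ²,η) = -T/(2σ²) + (1/(2σ⁴)) ∑ⱼ (yⱼ-η)²` minus `(1/(2T))` times the second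
Bhattacharyya basis function `v₂(y;σ²,η) = -T/σ² + (∑ⱼ (yⱼ-η)/σ²)²` equals the
degrees-of-freedom-corrected score `(1/(2σ²)) [ (∑ⱼ (yⱼ-ȳ)²)/σ² - (T-1) ]`,
which does not depend on `η`. -/
theorem stmt8 (T : ℕ) (hT : 1 ≤ T) (s η : ℝ) (hs : 0 < s) (y : Fin T → ℝ) :
    (-(T : ℝ) / (2 * s) + (1 / (2 * s ^ 2)) * ∑ j, (y j - η) ^ 2)
      - (1 / (2 * (T : ℝ))) * (-(T : ℝ) / s + (∑ j, (y j - η) / s) ^ 2)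
    = (1 / (2 * s)) * ((∑ j, (y j - (∑ k, y k) / (T : ℝ)) ^ 2) / s - ((T : ℝ) - 1)) :=
  stmt8_general T hT s η y
end

section
/- Let n, m ≥ 1, let X be a real n × m matrix with XᵀX invertible, and let A and B be symmetric m × m real matrices. Then the m(m+1)/2 × m(m+1)/2 matrix L_m (Xᵀ⊗Xᵀ)(I_{n²} + K_n)(X⊗X) L_mᵀ is invertible and vech(A)ᵀ [ L_m (Xᵀ⊗Xᵀ)(I_{n²} + K_n)(X⊗X) L_mᵀ ]⁻¹ vech(B) = (1/2) Tr( A (XᵀX)⁻¹ B (XᵀX)⁻¹ ). -/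
open Matrix Kronecker

noncomputable section

/-- Index set for the half-vectorization: pairs `(i,j)` with `j ≤ i`. -/
abbrev SymIdx (r : ℕ) := {p : Fin r × Fin r // p.2 ≤ p.1}

/-- Half-vectorization `vech` of a square matrix. -/
def vech {r : ℕ} (A : Matrix (Fin r) (Fin r) ℝ) : SymIdx r → ℝ :=
  fun p => A p.1.1 p.1.2

/-- The commutation matrix `K_n`, characterized by `K_n vec(A) = vec(Aᵀ)`. -/
def Kmat (n : ℕ) : Matrix (Fin n × Fin n) (Fin n × Fin n) ℝ :=
  Matrix.of fun p q => if q = (p.2, p.1) then 1 else 0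

/-- The elimination matrix `L_m`, characterized by `L_m vec(A) = vech(A)`. -/
def Lmat (m : ℕ) : Matrix (SymIdx m) (Fin m × Fin m) ℝ :=
  Matrix.of fun s q => if q = s.1 then 1 else 0

/-!
With `W` the diagonal matrix halving the diagonal entries of `vech`, `symKron S = L(S⊗S)(I+K)Lᵀ`
is the matrix of the congruence `C ↦ S C Sᵀ` on symmetric matrices, read from `W vech C` to
`vech`: summing over the lower triangle with weight `W` is half the sum over all entries.
Hence `W symKron(T) W` inverts `symKron S` whenever `S T = 1`, and the quadratic form becomes the
trace pairing `½ tr(A · T B Tᵀ)`. Finally `L(Xᵀ⊗Xᵀ)(I+K)(X⊗X)Lᵀ = symKron(XᵀX)` because `K`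
commutes past `X⊗X`.
-/

def vechWeight {m : ℕ} (p : Fin m × Fin m) : ℝ := if p.1 = p.2 then 1 / 2 else 1

theorem sum_symIdx_vechWeight_mul {m : ℕ} (f : Fin m × Fin m → ℝ)
    (hf : ∀ p, f p.swap = f p) :
    ∑ s : SymIdx m, vechWeight s.1 * f s.1 = (1 / 2) * ∑ p, f p := by
  classical
  set g : Fin m × Fin m → ℝ := fun p => if p.2 ≤ p.1 then vechWeight p * f p else 0
  have hsub : ∑ s : SymIdx m, vechWeight s.1 * f s.1 = ∑ p, g p := by
    rw [← Finset.sum_subtype (Finset.univ.filter fun p : Fin m × Fin m => p.2 ≤ p.1) (by simp)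
      (fun p => vechWeight p * f p), Finset.sum_filter]
  have hsymm : ∀ p, g p + g p.swap = f p := by
    rintro ⟨i, j⟩
    rcases lt_trichotomy i j with h | rfl | h
    · simpa [g, vechWeight, h.not_ge, h.le, h.ne'] using hf (i, j)
    · simp only [g, vechWeight, le_refl, if_true, Prod.swap_prod_mk]; ring
    · simp [g, vechWeight, h.not_ge, h.le, h.ne']
  have hswap : ∑ p : Fin m × Fin m, g p.swap = ∑ p, g p := Equiv.sum_comp (Equiv.prodComm _ _) g
  rw [hsub, ← Finset.sum_congr rfl (fun p _ => hsymm p), Finset.sum_add_distrib, hswap]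
  ring

theorem mul_Kmat_apply {ι : Type*} {n : ℕ} (M : Matrix ι (Fin n × Fin n) ℝ)
    (i : ι) (q : Fin n × Fin n) : (M * Kmat n) i q = M i q.swap := by
  have hq : ∀ r : Fin n × Fin n, r = (q.2, q.1) ↔ q = (r.2, r.1) := by
    intro r; constructor <;> rintro rfl <;> rfl
  simp [Matrix.mul_apply, Kmat, ← hq, Prod.swap]

theorem Kmat_mul_apply {ι : Type*} {n : ℕ} (M : Matrix (Fin n × Fin n) ι ℝ)
    (p : Fin n × Fin n) (j : ι) : (Kmat n * M) p j = M p.swap j := by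
  simp [Matrix.mul_apply, Kmat, Prod.swap]

theorem Kmat_mul_kronecker_self {n m : ℕ} (X : Matrix (Fin n) (Fin m) ℝ) :
    Kmat n * (X ⊗ₖ X) = (X ⊗ₖ X) * Kmat m := by
  ext p q
  rw [Kmat_mul_apply, mul_Kmat_apply]
  simp [mul_comm]

theorem Lmat_mul_mul_transpose_apply {m : ℕ} (Q : Matrix (Fin m × Fin m) (Fin m × Fin m) ℝ)
    (s t : SymIdx m) : (Lmat m * Q * (Lmat m)ᵀ) s t = Q s.1 t.1 := by
  simp [Matrix.mul_apply, Lmat]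

theorem kronecker_transpose_mul_one_add_Kmat_mul {n m : ℕ} (X : Matrix (Fin n) (Fin m) ℝ) :
    (Xᵀ ⊗ₖ Xᵀ) * (1 + Kmat n) * (X ⊗ₖ X) = ((Xᵀ * X) ⊗ₖ (Xᵀ * X)) * (1 + Kmat m) := by
  calc (Xᵀ ⊗ₖ Xᵀ) * (1 + Kmat n) * (X ⊗ₖ X) = (Xᵀ ⊗ₖ Xᵀ) * ((X ⊗ₖ X) * (1 + Kmat m)) := by
        rw [Matrix.mul_assoc, Matrix.add_mul, Matrix.one_mul, Kmat_mul_kronecker_self,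
          Matrix.mul_add (X ⊗ₖ X), Matrix.mul_one]
    _ = ((Xᵀ * X) ⊗ₖ (Xᵀ * X)) * (1 + Kmat m) := by
        rw [← Matrix.mul_assoc, ← Matrix.mul_kronecker_mul]

def symKron {m : ℕ} (S : Matrix (Fin m) (Fin m) ℝ) : Matrix (SymIdx m) (SymIdx m) ℝ :=
  Lmat m * ((S ⊗ₖ S) * (1 + Kmat m)) * (Lmat m)ᵀ

theorem symKron_apply {m : ℕ} (S : Matrix (Fin m) (Fin m) ℝ) (s t : SymIdx m) :
    symKron S s t = S s.1.1 t.1.1 * S s.1.2 t.1.2 + S s.1.1 t.1.2 * S s.1.2 t.1.1 := by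
  rw [symKron, Lmat_mul_mul_transpose_apply, Matrix.mul_add, Matrix.mul_one, Matrix.add_apply,
    mul_Kmat_apply]
  rfl

def vechWeightDiag (m : ℕ) : Matrix (SymIdx m) (SymIdx m) ℝ :=
  Matrix.diagonal fun s => vechWeight s.1

theorem vechWeightDiag_mulVec {m : ℕ} (v : SymIdx m → ℝ) :
    vechWeightDiag m *ᵥ v = fun s => vechWeight s.1 * v s :=
  funext (Matrix.mulVec_diagonal _ _)

theorem symKron_mulVec_vechWeightDiag_mulVec_vech {m : ℕ} (S : Matrix (Fin m) (Fin m) ℝ)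
    {C : Matrix (Fin m) (Fin m) ℝ} (hC : C.IsSymm) :
    symKron S *ᵥ (vechWeightDiag m *ᵥ vech C) = vech (S * C * Sᵀ) := by
  ext ⟨⟨i, j⟩, hji⟩
  have hswap : ∑ p : Fin m × Fin m, S i p.2 * S j p.1 * C p.1 p.2
      = ∑ p : Fin m × Fin m, S i p.1 * S j p.2 * C p.1 p.2 := by
    rw [← Equiv.sum_comp (Equiv.prodComm _ _)]
    simp [hC.apply]
  calc (symKron S *ᵥ (vechWeightDiag m *ᵥ vech C)) ⟨(i, j), hji⟩
      = ∑ t : SymIdx m, vechWeight t.1 *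
          ((S i t.1.1 * S j t.1.2 + S i t.1.2 * S j t.1.1) * C t.1.1 t.1.2) := by
        rw [vechWeightDiag_mulVec, Matrix.mulVec, dotProduct]
        refine Finset.sum_congr rfl fun t _ => ?_
        rw [symKron_apply, vech]; ring
    _ = 1 / 2 * ∑ p : Fin m × Fin m, (S i p.1 * S j p.2 + S i p.2 * S j p.1) * C p.1 p.2 :=
        sum_symIdx_vechWeight_mul (fun p => (S i p.1 * S j p.2 + S i p.2 * S j p.1) * C p.1 p.2)
          fun p => by simp only [Prod.fst_swap, Prod.snd_swap, hC.apply p.1 p.2]; ring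
    _ = ∑ p : Fin m × Fin m, S i p.1 * S j p.2 * C p.1 p.2 := by
        simp only [add_mul, Finset.sum_add_distrib, hswap]; ring
    _ = vech (S * C * Sᵀ) ⟨(i, j), hji⟩ := by
        simp only [vech, Matrix.mul_apply, Matrix.transpose_apply, Fintype.sum_prod_type,
          Finset.sum_mul]
        rw [Finset.sum_comm]
        exact Finset.sum_congr rfl fun _ _ => Finset.sum_congr rfl fun _ _ => by ring

theorem exists_isSymm_vech_eq {m : ℕ} (v : SymIdx m → ℝ) :
    ∃ C : Matrix (Fin m) (Fin m) ℝ, C.IsSymm ∧ vech C = v := by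
  refine ⟨Matrix.of fun i j =>
    if h : j ≤ i then v ⟨(i, j), h⟩ else v ⟨(j, i), (not_le.mp h).le⟩, ?_, ?_⟩
  · ext i j
    rcases lt_trichotomy i j with h | rfl | h
    · simp [h.le, h.not_ge]
    · rfl
    · simp [h.le, h.not_ge]
  · ext ⟨⟨i, j⟩, h⟩
    simp [vech, h]

theorem symKron_mul_weighted_symKron_eq_one {m : ℕ}
    {S T : Matrix (Fin m) (Fin m) ℝ} (hST : S * T = 1) :
    symKron S * (vechWeightDiag m * symKron T * vechWeightDiag m) = 1 := by
  refine Matrix.ext_iff_mulVec.mpr fun v => ?_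
  obtain ⟨C, hC, rfl⟩ := exists_isSymm_vech_eq v
  have hTCT : (T * C * Tᵀ).IsSymm := by
    simp [Matrix.IsSymm, Matrix.transpose_mul, hC.eq, Matrix.mul_assoc]
  rw [Matrix.one_mulVec, ← Matrix.mulVec_mulVec, ← Matrix.mulVec_mulVec, ← Matrix.mulVec_mulVec,
    symKron_mulVec_vechWeightDiag_mulVec_vech T hC,
    symKron_mulVec_vechWeightDiag_mulVec_vech S hTCT]
  rw [← Matrix.mul_assoc, ← Matrix.mul_assoc, hST, Matrix.one_mul, Matrix.mul_assoc,
    ← Matrix.transpose_mul, hST, Matrix.transpose_one, Matrix.mul_one]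

theorem vech_dotProduct_weighted_symKron_mulVec_vech {m : ℕ}
    (T : Matrix (Fin m) (Fin m) ℝ) {A B : Matrix (Fin m) (Fin m) ℝ} (hA : A.IsSymm)
    (hB : B.IsSymm) :
    vech A ⬝ᵥ (vechWeightDiag m * symKron T * vechWeightDiag m) *ᵥ vech B
      = 1 / 2 * (A * T * B * Tᵀ).trace := by
  have hTBT : (T * B * Tᵀ).IsSymm := by
    simp [Matrix.IsSymm, Matrix.transpose_mul, hB.eq, Matrix.mul_assoc]
  rw [← Matrix.mulVec_mulVec, ← Matrix.mulVec_mulVec,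
    symKron_mulVec_vechWeightDiag_mulVec_vech T hB, vechWeightDiag_mulVec]
  calc vech A ⬝ᵥ (fun s => vechWeight s.1 * vech (T * B * Tᵀ) s)
      = ∑ s : SymIdx m, vechWeight s.1 * (A s.1.1 s.1.2 * (T * B * Tᵀ) s.1.1 s.1.2) :=
        Finset.sum_congr rfl fun s _ => by simp only [vech]; ring
    _ = 1 / 2 * ∑ p : Fin m × Fin m, A p.1 p.2 * (T * B * Tᵀ) p.1 p.2 :=
        sum_symIdx_vechWeight_mul (fun p => A p.1 p.2 * (T * B * Tᵀ) p.1 p.2)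
          fun p => by simp only [Prod.fst_swap, Prod.snd_swap, hA.apply, hTBT.apply]
    _ = 1 / 2 * (A * T * B * Tᵀ).trace := by
        have hassoc : A * T * B * Tᵀ = A * (T * B * Tᵀ) := by simp only [Matrix.mul_assoc]
        rw [hassoc, Matrix.trace, Fintype.sum_prod_type]
        refine congrArg _ (Finset.sum_congr rfl fun i _ => ?_)
        rw [Matrix.diag_apply, Matrix.mul_apply]
        exact Finset.sum_congr rfl fun j _ => by rw [hTBT.apply]

theorem stmt15_general (n m : ℕ)
    (X : Matrix (Fin n) (Fin m) ℝ) (hX : IsUnit (Xᵀ * X).det)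
    (A B : Matrix (Fin m) (Fin m) ℝ) (hA : A.IsSymm) (hB : B.IsSymm) :
    IsUnit (Lmat m * (Xᵀ ⊗ₖ Xᵀ) * (1 + Kmat n) * (X ⊗ₖ X) * (Lmat m)ᵀ).det
    ∧ vech A ⬝ᵥ (Lmat m * (Xᵀ ⊗ₖ Xᵀ) * (1 + Kmat n) * (X ⊗ₖ X) * (Lmat m)ᵀ)⁻¹.mulVec (vech B)
      = (1 / 2) * (A * (Xᵀ * X)⁻¹ * B * (Xᵀ * X)⁻¹).trace := by
  have hM : Lmat m * (Xᵀ ⊗ₖ Xᵀ) * (1 + Kmat n) * (X ⊗ₖ X) * (Lmat m)ᵀ = symKron (Xᵀ * X) := by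
    rw [symKron, ← kronecker_transpose_mul_one_add_Kmat_mul]
    simp only [Matrix.mul_assoc]
  have hinv := symKron_mul_weighted_symKron_eq_one (Matrix.mul_nonsing_inv _ hX)
  have hsymm : (Xᵀ * X)⁻¹ᵀ = (Xᵀ * X)⁻¹ := by
    rw [Matrix.transpose_nonsing_inv, Matrix.transpose_mul, Matrix.transpose_transpose]
  rw [hM, Matrix.inv_eq_right_inv hinv, vech_dotProduct_weighted_symKron_mulVec_vech _ hA hB,
    hsymm]
  exact ⟨Matrix.isUnit_det_of_right_inverse hinv, rfl⟩

/-- **The key quadratic-form identity (Lemma `key`).**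
If `XᵀX` is invertible and `A, B` are symmetric, then the
`m(m+1)/2 × m(m+1)/2` matrix `L_m(Xᵀ⊗Xᵀ)(I + K_n)(X⊗X)L_mᵀ` is invertible and
`vech(A)ᵀ [L_m(Xᵀ⊗Xᵀ)(I + K_n)(X⊗X)L_mᵀ]⁻¹ vech(B)
  = ½ Tr(A(XᵀX)⁻¹B(XᵀX)⁻¹)`. -/
theorem stmt15 (n m : ℕ) (hn : 1 ≤ n) (hm : 1 ≤ m)
    (X : Matrix (Fin n) (Fin m) ℝ) (hX : IsUnit (Xᵀ * X).det)
    (A B : Matrix (Fin m) (Fin m) ℝ) (hA : A.IsSymm) (hB : B.IsSymm) :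
    IsUnit (Lmat m * (Xᵀ ⊗ₖ Xᵀ) * (1 + Kmat n) * (X ⊗ₖ X) * (Lmat m)ᵀ).det
    ∧ vech A ⬝ᵥ (Lmat m * (Xᵀ ⊗ₖ Xᵀ) * (1 + Kmat n) * (X ⊗ₖ X) * (Lmat m)ᵀ)⁻¹.mulVec (vech B)
      = (1 / 2) * (A * (Xᵀ * X)⁻¹ * B * (Xᵀ * X)⁻¹).trace :=
  stmt15_general n m X hX A B hA hB
end
end

section
/- Let m ≥ 1 be an integer and A ⊆ {1,…,m}. Define κ_A = 1{A = ∅} + Σ_{∅ ≠ S ⊆ {1,…,m}} (−1)^{|S|} · |{ (T, R) : T ⊊ S, R ⊆ {1,…,m}∖S, R ∪ T = A }|. Then κ_A = 0 for every A ⊆ {1,…,m}. -/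
/-!
For fixed `S`, a pair `(T, R)` with `T ⊆ S`, `R ⊆ Sᶜ` and `R ∪ T = A` is forced to be
`(A ∩ S, A \ S)`, and `T = A ∩ S` is a strict subset of `S` exactly when `S ⊄ A`. Hence
`κ_A = 1{A = ∅} + ∑_{∅ ≠ S} (-1)^|S| - ∑_{∅ ≠ S ⊆ A} (-1)^|S|`, and both alternating sums
are evaluated by `∑_{S ⊆ s} (-1)^|S| = 1{s = ∅}`: the first is `-1` because the ground set is
nonempty, the second is `1{A = ∅} - 1`.
-/

open Finset

variable {α : Type*} [DecidableEq α]

theorem sum_nonempty_powerset_neg_one_pow_card (s : Finset α) :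
    ∑ S ∈ s.powerset.filter (fun S => S ≠ ∅), (-1 : ℤ) ^ #S = (if s = ∅ then 1 else 0) - 1 := by
  rw [filter_ne', sum_erase_eq_sub (empty_mem_powerset s), sum_powerset_neg_one_pow_card,
    card_empty, pow_zero]

variable [Fintype α]

theorem filter_powerset_product_union_eq (S A : Finset α) :
    (S.powerset ×ˢ (univ \ S).powerset).filter (fun p => p.2 ∪ p.1 = A) =
      {(A ∩ S, A \ S)} := by
  ext ⟨T, R⟩
  simp only [mem_filter, mem_product, mem_powerset, mem_singleton, Prod.mk.injEq]
  constructor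
  · rintro ⟨⟨hT, hR⟩, rfl⟩
    have hRS : Disjoint R S := by simpa using (subset_sdiff.mp hR).2
    exact ⟨by rw [union_inter_distrib_right, disjoint_iff_inter_eq_empty.mp hRS, empty_union,
        inter_eq_left.mpr hT],
      by rw [union_sdiff_distrib, sdiff_eq_empty_iff_subset.mpr hT, union_empty,
        hRS.sdiff_eq_left]⟩
  · rintro ⟨rfl, rfl⟩
    exact ⟨⟨inter_subset_right, sdiff_subset_sdiff (subset_univ A) le_rfl⟩,
      sdiff_union_inter A S⟩

theorem card_filter_ssubset_decompositions (S A : Finset α) :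
    #((S.powerset ×ˢ (univ \ S).powerset).filter (fun p => p.1 ⊂ S ∧ p.2 ∪ p.1 = A)) =
      if S ⊆ A then 0 else 1 := by
  have hssubset : A ∩ S ⊂ S ↔ ¬S ⊆ A := by
    rw [ssubset_iff_subset_ne, ne_eq, inter_eq_right]
    exact and_iff_right inter_subset_right
  simp_rw [← filter_filter (fun p : Finset α × Finset α => p.1 ⊂ S),
    filter_comm (fun p : Finset α × Finset α => p.1 ⊂ S),
    filter_powerset_product_union_eq, filter_singleton, hssubset]
  split_ifs <;> rfl

/-- **Vanishing of the coefficients `κ_A` (key combinatorial step of Theorem 1).**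
For `m ≥ 1` and `A ⊆ {1,…,m}`,
`κ_A = 1{A = ∅} + ∑_{∅ ≠ S ⊆ {1,…,m}} (-1)^{|S|} · #{(T,R) : T ⊊ S, R ⊆ {1,…,m}\S, R ∪ T = A}`
equals `0`. -/
theorem stmt18 (m : ℕ) (hm : 1 ≤ m) (A : Finset (Fin m)) :
    ((if A = ∅ then 1 else 0) : ℤ)
      + ∑ S ∈ (Finset.univ : Finset (Fin m)).powerset.filter (fun S => S ≠ ∅),
          (-1 : ℤ) ^ S.card *
            ((((S.powerset ×ˢ ((Finset.univ : Finset (Fin m)) \ S).powerset).filter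
                (fun p => p.1 ⊂ S ∧ p.2 ∪ p.1 = A)).card : ℤ))
    = 0 := by
  have huniv : (univ : Finset (Fin m)) ≠ ∅ :=
    univ_nonempty_iff.mpr (Fin.pos_iff_nonempty.mp hm) |>.ne_empty
  have hsubsets : (univ.powerset.filter (fun S : Finset (Fin m) => S ≠ ∅)).filter (· ⊆ A) =
      A.powerset.filter (fun S => S ≠ ∅) := by
    ext S
    simp only [mem_filter, mem_powerset, subset_univ, true_and]
    tauto
  have hterm (S : Finset (Fin m)) : (-1 : ℤ) ^ #S * (if S ⊆ A then 0 else 1 : ℕ) =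
      (-1) ^ #S - if S ⊆ A then (-1) ^ #S else 0 := by
    split_ifs <;> simp
  simp_rw [card_filter_ssubset_decompositions, hterm, sum_sub_distrib, ← sum_filter,
    hsubsets, sum_nonempty_powerset_neg_one_pow_card, if_neg huniv]
  ring
end
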